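/- Let s ∈ ℝ, 0 < p < ∞, 0 < q ≤ ∞, and let W be a matrix weight and υ : 𝒟 → (0,∞). The following are equivalent: (i) υ is almost increasing (there is C with υ(Q) ≤ Cυ(P) whenever Q ⊆ P); (ii) for every dyadic cube Q and every z ∈ ℂᵐ, the single-pointed sequence {1_{Q=R} z}_{R∈𝒟} lies in ȧ_{p,q}^{s,υ}(W) and its quasi-norm is comparable to 2^{j_Q(s + n/2)} υ(Q)^{−1} (∫_Q |W^{1/p}(x) z|^p dx)^{1/p}, with constants independent of Q and z; (iii) there exists a nonzero u ∈ ℂᵐ such that (ii) holds for z = u. -/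

import Mathlib

open MeasureTheory
open scoped BigOperators ENNReal ComplexOrder

/-- A dyadic cube `2^{-j}([0,1)^n + k)` in `ℝⁿ`, encoded by its generation `j`
and its position `k`. -/
structure DyadicCube (n : ℕ) where
  j : ℤ
  k : Fin n → ℤ
deriving DecidableEq

namespace DyadicCube

variable {n : ℕ}

/-- The side length `ℓ(Q) = 2^{-j}`. -/
noncomputable def len (Q : DyadicCube n) : ℝ := (2 : ℝ) ^ (-Q.j)

/-- The lower-left corner `x_Q = 2^{-j} k`. -/
noncomputable def corner (Q : DyadicCube n) (i : Fin n) : ℝ := (2 : ℝ) ^ (-Q.j) * Q.k i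

/-- The volume `|Q| = 2^{-jn}`. -/
noncomputable def vol (Q : DyadicCube n) : ℝ := Q.len ^ (n : ℕ)

/-- The cube `Q` as a subset of `ℝⁿ`. -/
noncomputable def toSet (Q : DyadicCube n) : Set (Fin n → ℝ) :=
  {x | ∀ i, Q.corner i ≤ x i ∧ x i < Q.corner i + Q.len}

/-- The Euclidean distance `|x_Q - x_R|` between the corners of two dyadic cubes. -/
noncomputable def cdist (Q R : DyadicCube n) : ℝ :=
  Real.sqrt (∑ i, (Q.corner i - R.corner i) ^ 2)

end DyadicCube

/-- `υ : 𝒟 → (0,∞)` is a `(δ₁, δ₂; ω)`-order growth function: it is positive and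
`υ(Q)/υ(R) ≤ C (1 + |x_Q - x_R|/(ℓ(Q) ∨ ℓ(R)))^ω (|Q|/|R|)^{δ₁}` when `ℓ(Q) ≤ ℓ(R)`,
with exponent `δ₂` in place of `δ₁` when `ℓ(R) < ℓ(Q)`. -/
def IsGrowthFunction (n : ℕ) (δ₁ δ₂ ω : ℝ) (υ : DyadicCube n → ℝ) : Prop :=
  (∀ Q, 0 < υ Q) ∧ ∃ C : ℝ, 0 < C ∧ ∀ Q R : DyadicCube n,
    υ Q / υ R ≤ C * (1 + Q.cdist R / max Q.len R.len) ^ ω *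
      (if Q.len ≤ R.len then (Q.vol / R.vol) ^ δ₁ else (Q.vol / R.vol) ^ δ₂)

open Matrix

/-- The Euclidean norm `|z|` of a vector `z ∈ ℂᵐ`. -/
noncomputable def cnorm {m : ℕ} (z : Fin m → ℂ) : ℝ :=
  Real.sqrt (∑ i, Complex.normSq (z i))

/-- The operator norm (with respect to the Euclidean norm) of an `m × m` complex matrix. -/
noncomputable def opN {m : ℕ} (M : Matrix (Fin m) (Fin m) ℂ) : ℝ :=
  ⨆ z : {z : Fin m → ℂ // cnorm z ≤ 1}, cnorm (M.mulVec z.1)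

/-- The power `A^α = U diag(λ₁^α, …, λ_m^α) U*` of a Hermitian matrix
`A = U diag(λ₁, …, λ_m) U*`, defined via the spectral decomposition
(junk value `0` if `A` is not Hermitian). -/
noncomputable def hPow {m : ℕ} (A : Matrix (Fin m) (Fin m) ℂ) (α : ℝ) :
    Matrix (Fin m) (Fin m) ℂ :=
  if hA : A.IsHermitian then
    (hA.eigenvectorUnitary : Matrix (Fin m) (Fin m) ℂ) *
      Matrix.diagonal (fun i => ((hA.eigenvalues i ^ α : ℝ) : ℂ)) *
      star (hA.eigenvectorUnitary : Matrix (Fin m) (Fin m) ℂ)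
  else 0

/-- The quadratic form `⟨A z, z⟩ = re (z* ⬝ A z)` of a matrix. -/
noncomputable def quadForm {m : ℕ} (A : Matrix (Fin m) (Fin m) ℂ) (z : Fin m → ℂ) : ℝ :=
  (star z ⬝ᵥ A.mulVec z).re

open MeasureTheory

/-- The `ℓ^q`-norm (over `ℤ`) of a family of extended nonnegative reals,
with the usual modification (supremum) when `q = ∞`. -/
noncomputable def lqNorm (q : ℝ≥0∞) (a : ℤ → ℝ≥0∞) : ℝ≥0∞ :=
  if q = ⊤ then ⨆ j, a j else (∑' j, a j ^ q.toReal) ^ (1 / q.toReal)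

/-- The `ℓ^q(L^p)` norm `(∑_j ‖f_j‖_{L^p}^q)^{1/q}` of a sequence of functions. -/
noncomputable def LBnorm (n : ℕ) (p : ℝ) (q : ℝ≥0∞) (f : ℤ → (Fin n → ℝ) → ℝ) : ℝ≥0∞ :=
  lqNorm q (fun j => (∫⁻ x, ENNReal.ofReal |f j x| ^ p) ^ (1 / p))

/-- The `L^p(ℓ^q)` norm `‖(∑_j |f_j|^q)^{1/q}‖_{L^p}` of a sequence of functions. -/
noncomputable def LFnorm (n : ℕ) (p : ℝ) (q : ℝ≥0∞) (f : ℤ → (Fin n → ℝ) → ℝ) : ℝ≥0∞ :=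
  (∫⁻ x, (lqNorm q (fun j => ENNReal.ofReal |f j x|)) ^ p) ^ (1 / p)

/-- The truncation `{f_j 1_P 1_{j ≥ j_P}}_j` of a sequence of functions to a dyadic cube `P`. -/
noncomputable def truncate (n : ℕ) (P : DyadicCube n) (f : ℤ → (Fin n → ℝ) → ℝ) :
    ℤ → (Fin n → ℝ) → ℝ :=
  fun j => if P.j ≤ j then P.toSet.indicator (f j) else 0

/-- The norm `‖{f_j}‖_{LḂ^υ_{p,q}} = sup_P υ(P)⁻¹ ‖{f_j 1_P 1_{j ≥ j_P}}‖_{ℓ^q(L^p)}`. -/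
noncomputable def LBvNorm (n : ℕ) (p : ℝ) (q : ℝ≥0∞) (υ : DyadicCube n → ℝ)
    (f : ℤ → (Fin n → ℝ) → ℝ) : ℝ≥0∞ :=
  ⨆ P : DyadicCube n, (ENNReal.ofReal (υ P))⁻¹ * LBnorm n p q (truncate n P f)

/-- The norm `‖{f_j}‖_{LḞ^υ_{p,q}} = sup_P υ(P)⁻¹ ‖{f_j 1_P 1_{j ≥ j_P}}‖_{L^p(ℓ^q)}`. -/
noncomputable def LFvNorm (n : ℕ) (p : ℝ) (q : ℝ≥0∞) (υ : DyadicCube n → ℝ)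
    (f : ℤ → (Fin n → ℝ) → ℝ) : ℝ≥0∞ :=
  ⨆ P : DyadicCube n, (ENNReal.ofReal (υ P))⁻¹ * LFnorm n p q (truncate n P f)

/-- The unique dyadic cube of generation `j` containing the point `x`. -/
noncomputable def cubeAt (n : ℕ) (j : ℤ) (x : Fin n → ℝ) : DyadicCube n :=
  ⟨j, fun i => ⌊(2 : ℝ) ^ j * x i⌋⟩

/-- The function `x ↦ 2^{js} |W^{1/p}(x) t⃗_j(x)|`, where
`t⃗_j = ∑_{Q ∈ 𝒟_j} |Q|^{-1/2} 1_Q t⃗_Q`. -/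
noncomputable def seqFn (n m : ℕ) (s p : ℝ)
    (W : (Fin n → ℝ) → Matrix (Fin m) (Fin m) ℂ)
    (t : DyadicCube n → Fin m → ℂ) (j : ℤ) (x : Fin n → ℝ) : ℝ :=
  (2 : ℝ) ^ ((j : ℝ) * s) *
    cnorm ((hPow (W x) (1 / p)).mulVec
      ((Real.sqrt (cubeAt n j x).vol)⁻¹ • t (cubeAt n j x)))

/-- The quasi-norm of `ḃ^{s,υ}_{p,q}(W)`. -/
noncomputable def bSeqNorm (n m : ℕ) (s p : ℝ) (q : ℝ≥0∞) (υ : DyadicCube n → ℝ)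
    (W : (Fin n → ℝ) → Matrix (Fin m) (Fin m) ℂ)
    (t : DyadicCube n → Fin m → ℂ) : ℝ≥0∞ :=
  LBvNorm n p q υ (seqFn n m s p W t)

/-- The quasi-norm of `ḟ^{s,υ}_{p,q}(W)`. -/
noncomputable def fSeqNorm (n m : ℕ) (s p : ℝ) (q : ℝ≥0∞) (υ : DyadicCube n → ℝ)
    (W : (Fin n → ℝ) → Matrix (Fin m) (Fin m) ℂ)
    (t : DyadicCube n → Fin m → ℂ) : ℝ≥0∞ :=
  LFvNorm n p q υ (seqFn n m s p W t)

/-- The single-pointed sequence `{1_{Q = R} z}_{R ∈ 𝒟}`. -/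
noncomputable def singleSeq (n m : ℕ) (Q : DyadicCube n) (z : Fin m → ℂ) :
    DyadicCube n → Fin m → ℂ :=
  fun R => if R = Q then z else 0

/-- The quantity `2^{j_Q(s + n/2)} υ(Q)⁻¹ (∫_Q |W^{1/p}(x) z|^p dx)^{1/p}`. -/
noncomputable def singleBound (n m : ℕ) (s p : ℝ) (υ : DyadicCube n → ℝ)
    (W : (Fin n → ℝ) → Matrix (Fin m) (Fin m) ℂ)
    (Q : DyadicCube n) (z : Fin m → ℂ) : ℝ≥0∞ :=
  ENNReal.ofReal ((2 : ℝ) ^ ((Q.j : ℝ) * (s + n / 2)) / υ Q) *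
    (∫⁻ x in Q.toSet, ENNReal.ofReal (cnorm ((hPow (W x) (1 / p)).mulVec z)) ^ p) ^ (1 / p)

-- Section A: dyadic cube geometry

namespace DyadicCube
variable {n : ℕ}

lemma len_pos (Q : DyadicCube n) : 0 < Q.len := zpow_pos (by norm_num) _

lemma mem_toSet_iff_floor {Q : DyadicCube n} {x : Fin n → ℝ} :
    x ∈ Q.toSet ↔ ∀ i, ⌊(2:ℝ) ^ Q.j * x i⌋ = Q.k i := by
  unfold toSet corner len
  simp only [Set.mem_setOf_eq]
  refine forall_congr' fun i => ?_
  rw [Int.floor_eq_iff]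
  have ha : (0:ℝ) < (2:ℝ) ^ Q.j := zpow_pos (by norm_num) _
  have hinv : (2:ℝ) ^ (-Q.j) = ((2:ℝ) ^ Q.j)⁻¹ := zpow_neg 2 Q.j
  rw [hinv]
  constructor
  · rintro ⟨h1, h2⟩
    constructor
    · calc (Q.k i : ℝ) = ((2:ℝ)^Q.j) * (((2:ℝ)^Q.j)⁻¹ * (Q.k i)) := by
            field_simp
      _ ≤ 2 ^ Q.j * x i := by
            exact mul_le_mul_of_nonneg_left h1 ha.le
    · calc (2:ℝ) ^ Q.j * x i < 2 ^ Q.j * (((2:ℝ)^Q.j)⁻¹ * (Q.k i) + ((2:ℝ)^Q.j)⁻¹) :=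
            mul_lt_mul_of_pos_left h2 ha
      _ = Q.k i + 1 := by field_simp
  · rintro ⟨h1, h2⟩
    constructor
    · calc ((2:ℝ)^Q.j)⁻¹ * (Q.k i) ≤ ((2:ℝ)^Q.j)⁻¹ * ((2:ℝ)^Q.j * x i) :=
            mul_le_mul_of_nonneg_left h1 (inv_nonneg.2 ha.le)
      _ = x i := by field_simp
    · calc x i = ((2:ℝ)^Q.j)⁻¹ * ((2:ℝ)^Q.j * x i) := by field_simp
      _ < ((2:ℝ)^Q.j)⁻¹ * ((Q.k i) + 1) := mul_lt_mul_of_pos_left h2 (inv_pos.2 ha)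
      _ = ((2:ℝ)^Q.j)⁻¹ * (Q.k i) + ((2:ℝ)^Q.j)⁻¹ := by ring

lemma cubeAt_eq_iff {j : ℤ} {x : Fin n → ℝ} {Q : DyadicCube n} :
    cubeAt n j x = Q ↔ j = Q.j ∧ x ∈ Q.toSet := by
  obtain ⟨jQ, kQ⟩ := Q
  simp only [cubeAt, mk.injEq, mem_toSet_iff_floor]
  constructor
  · rintro ⟨rfl, rfl⟩
    exact ⟨rfl, fun i => rfl⟩
  · rintro ⟨rfl, h⟩
    exact ⟨rfl, funext h⟩

lemma corner_mem_toSet (Q : DyadicCube n) : Q.corner ∈ Q.toSet :=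
  fun i => ⟨le_refl _, lt_add_of_pos_right _ Q.len_pos⟩

lemma measurableSet_toSet (Q : DyadicCube n) : MeasurableSet Q.toSet := by
  have : Q.toSet = ⋂ i, (fun x : Fin n → ℝ => x i) ⁻¹'
      (Set.Ico (Q.corner i) (Q.corner i + Q.len)) := by
    ext x; simp [toSet, Set.mem_iInter, Set.mem_Ico]
  rw [this]
  exact MeasurableSet.iInter fun i => (measurableSet_Ico).preimage (measurable_pi_apply i)

lemma volume_toSet_pos (Q : DyadicCube n) : 0 < volume Q.toSet := by
  have : Q.toSet = Set.pi Set.univ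
      (fun i => Set.Ico (Q.corner i) (Q.corner i + Q.len)) := by
    ext x; simp [toSet, Set.mem_pi, Set.mem_Ico]
  rw [this, volume_pi_pi]
  refine CanonicallyOrderedAdd.prod_pos.2 fun i _ => ?_
  rw [Real.volume_Ico]
  simp [ENNReal.ofReal_pos, Q.len_pos]

lemma floor_div_int_congr {x y : ℝ} {c : ℤ} (hc : 0 < c) (h : ⌊x⌋ = ⌊y⌋) :
    ⌊x / (c:ℝ)⌋ = ⌊y / (c:ℝ)⌋ := by
  have hc' : (0:ℝ) < (c:ℝ) := by exact_mod_cast hc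
  have claim : ∀ u : ℝ, ⌊u / (c:ℝ)⌋ = ⌊((⌊u⌋ : ℝ)) / (c:ℝ)⌋ := by
    intro u
    symm
    rw [Int.floor_eq_iff]
    set N := ⌊u / (c:ℝ)⌋ with hN
    have h1 : (N:ℝ) ≤ u / c := Int.floor_le _
    have h2 : u / c < N + 1 := Int.lt_floor_add_one _
    have h1' : (N:ℝ) * c ≤ u := by
      rwa [le_div_iff₀ hc', ] at h1
    have h2' : u < ((N:ℝ) + 1) * c := by rwa [div_lt_iff₀ hc'] at h2
    have hfl1 : N * c ≤ ⌊u⌋ := Int.le_floor.2 (by exact_mod_cast h1')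
    have hfl2 : ⌊u⌋ < (N + 1) * c := Int.floor_lt.2 (by exact_mod_cast h2')
    constructor
    · rw [le_div_iff₀ hc']
      exact_mod_cast hfl1
    · rw [div_lt_iff₀ hc']
      exact_mod_cast hfl2
  rw [claim x, claim y, h]

lemma subset_of_mem_inter {Q P : DyadicCube n} (hj : P.j ≤ Q.j) {x : Fin n → ℝ}
    (hxP : x ∈ P.toSet) (hxQ : x ∈ Q.toSet) : Q.toSet ⊆ P.toSet := by
  intro y hy
  rw [mem_toSet_iff_floor] at *
  intro i
  rw [← hxP i]
  set d : ℕ := (Q.j - P.j).toNat with hd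
  have hQj : Q.j = P.j + d := by
    rw [hd, Int.toNat_of_nonneg (by omega)]; ring
  have key : ∀ u : ℝ, (2:ℝ) ^ P.j * u = ((2:ℝ) ^ Q.j * u) / ((2^d : ℤ) : ℝ) := by
    intro u
    have : (2:ℝ) ^ Q.j = (2:ℝ) ^ P.j * 2 ^ d := by
      rw [hQj, zpow_add₀ (by norm_num : (2:ℝ) ≠ 0), zpow_natCast]
    push_cast
    rw [this]
    field_simp
  rw [key (y i), key (x i)]
  exact floor_div_int_congr (by positivity) (by rw [hy i, hxQ i])

lemma jle_of_subset (hn : 0 < n) {Q P : DyadicCube n} (h : Q.toSet ⊆ P.toSet) :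
    P.j ≤ Q.j := by
  -- first show Q.len ≤ P.len using points along coordinate i0
  set i0 : Fin n := ⟨0, hn⟩
  have hpt : ∀ t : ℝ, 0 ≤ t → t < Q.len →
      (fun i => Q.corner i + if i = i0 then t else 0) ∈ Q.toSet := by
    intro t ht1 ht2 i
    by_cases hi : i = i0 <;> simp [hi, ht1, ht2, Q.len_pos]
  have hcorner : P.corner i0 ≤ Q.corner i0 := by
    have := h (hpt 0 le_rfl Q.len_pos)
    simpa using (this i0).1
  have hlt : ∀ t : ℝ, 0 ≤ t → t < Q.len → Q.corner i0 + t < P.corner i0 + P.len := by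
    intro t ht1 ht2
    have := h (hpt t ht1 ht2)
    simpa using (this i0).2
  have hlen : Q.len ≤ P.len := by
    by_contra hcon
    push_neg at hcon
    have h0 : Q.corner i0 + 0 < P.corner i0 + P.len := hlt 0 le_rfl Q.len_pos
    set t := P.corner i0 + P.len - Q.corner i0 with htdef
    have ht1 : 0 ≤ t := by simp only [htdef]; linarith
    have ht2 : t < Q.len := by
      have : P.len < Q.len := hcon
      nlinarith [hcorner]
    have := hlt t ht1 ht2
    simp only [htdef] at this
    linarith
  have : (2:ℝ) ^ (-Q.j) ≤ (2:ℝ) ^ (-P.j) := hlen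
  have := (zpow_le_zpow_iff_right₀ (by norm_num : (1:ℝ) < 2)).1 this
  omega

end DyadicCube

-- Section B: evaluation of the norms on single-pointed sequences

lemma lqNorm_single {q : ℝ≥0∞} (hq : q ≠ 0) (j0 : ℤ) (a : ℤ → ℝ≥0∞)
    (h : ∀ j, j ≠ j0 → a j = 0) : lqNorm q a = a j0 := by
  unfold lqNorm
  by_cases hqt : q = ⊤
  · simp only [hqt, if_true]
    refine le_antisymm (iSup_le fun j => ?_) (le_iSup a j0)
    by_cases hj : j = j0
    · subst hj; exact le_rfl
    · simp [h j hj]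
  · simp only [hqt, if_false]
    have hqt' : 0 < q.toReal := ENNReal.toReal_pos hq hqt
    rw [tsum_eq_single j0 (fun j hj => by rw [h j hj, ENNReal.zero_rpow_of_pos hqt'])]
    rw [← ENNReal.rpow_mul, mul_one_div, div_self hqt'.ne', ENNReal.rpow_one]

lemma cnorm_nonneg {m : ℕ} (v : Fin m → ℂ) : 0 ≤ cnorm v := Real.sqrt_nonneg _

lemma cnorm_zero {m : ℕ} : cnorm (0 : Fin m → ℂ) = 0 := by
  simp [cnorm]

lemma cnorm_real_smul {m : ℕ} (r : ℝ) (hr : 0 ≤ r) (v : Fin m → ℂ) :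
    cnorm (r • v) = r * cnorm v := by
  unfold cnorm
  have : ∀ i, Complex.normSq ((r • v) i) = r ^ 2 * Complex.normSq (v i) := by
    intro i
    simp only [Pi.smul_apply, Complex.real_smul, Complex.normSq_mul, Complex.normSq_ofReal]
    ring
  simp_rw [this]
  rw [← Finset.mul_sum, Real.sqrt_mul (sq_nonneg r), Real.sqrt_sq hr]

open scoped Classical in
lemma seqFn_singleSeq (n m : ℕ) (s p : ℝ)
    (W : (Fin n → ℝ) → Matrix (Fin m) (Fin m) ℂ) (Q : DyadicCube n) (z : Fin m → ℂ)
    (j : ℤ) (x : Fin n → ℝ) :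
    seqFn n m s p W (singleSeq n m Q z) j x =
      if j = Q.j ∧ x ∈ Q.toSet then
        (2:ℝ) ^ ((Q.j : ℝ) * s) *
          ((Real.sqrt Q.vol)⁻¹ * cnorm ((hPow (W x) (1 / p)).mulVec z))
      else 0 := by
  unfold seqFn singleSeq
  by_cases h : cubeAt n j x = Q
  · have hiff := (DyadicCube.cubeAt_eq_iff (j := j) (x := x) (Q := Q)).1 h
    rw [if_pos hiff, h, if_pos rfl, hiff.1]
    have hr : (0:ℝ) ≤ (Real.sqrt Q.vol)⁻¹ := inv_nonneg.2 (Real.sqrt_nonneg _)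
    rw [show ((Real.sqrt Q.vol)⁻¹ • z) = (((Real.sqrt Q.vol)⁻¹ : ℝ) : ℂ) • z from by
      funext i; simp [Complex.real_smul]]
    rw [Matrix.mulVec_smul]
    rw [show ((((Real.sqrt Q.vol)⁻¹ : ℝ) : ℂ) • (hPow (W x) (1/p)).mulVec z)
        = ((Real.sqrt Q.vol)⁻¹ : ℝ) • (hPow (W x) (1/p)).mulVec z from by
      funext i; simp [Complex.real_smul]]
    rw [cnorm_real_smul _ hr]
  · rw [if_neg h]
    rw [if_neg (fun hc => h (DyadicCube.cubeAt_eq_iff.2 hc))]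
    simp [cnorm_zero]

lemma LBnorm_of_single {n : ℕ} {p : ℝ} (hp : 0 < p) {q : ℝ≥0∞} (hq : q ≠ 0)
    (j0 : ℤ) (F : ℤ → (Fin n → ℝ) → ℝ) (h : ∀ j, j ≠ j0 → ∀ x, F j x = 0) :
    LBnorm n p q F = (∫⁻ x, ENNReal.ofReal |F j0 x| ^ p) ^ (1 / p) := by
  unfold LBnorm
  refine lqNorm_single hq j0 _ fun j hj => ?_
  have : ∀ x, ENNReal.ofReal |F j x| ^ p = 0 := fun x => by
    rw [h j hj x]; simp [ENNReal.zero_rpow_of_pos hp]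
  simp_rw [this]
  rw [lintegral_zero, ENNReal.zero_rpow_of_pos (by positivity)]

lemma LFnorm_of_single {n : ℕ} {p : ℝ} (hp : 0 < p) {q : ℝ≥0∞} (hq : q ≠ 0)
    (j0 : ℤ) (F : ℤ → (Fin n → ℝ) → ℝ) (h : ∀ j, j ≠ j0 → ∀ x, F j x = 0) :
    LFnorm n p q F = (∫⁻ x, ENNReal.ofReal |F j0 x| ^ p) ^ (1 / p) := by
  unfold LFnorm
  have : ∀ x, lqNorm q (fun j => ENNReal.ofReal |F j x|) = ENNReal.ofReal |F j0 x| :=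
    fun x => lqNorm_single hq j0 _ fun j hj => by simp [h j hj x]
  simp_rw [this]

lemma c0_eq (n : ℕ) (s : ℝ) (Q : DyadicCube n) :
    (2:ℝ) ^ ((Q.j:ℝ) * s) * (Real.sqrt Q.vol)⁻¹ =
      (2:ℝ) ^ ((Q.j:ℝ) * (s + (n:ℝ)/2)) := by
  have h2 : (0:ℝ) < 2 := two_pos
  have hv : Q.vol = (2:ℝ) ^ ((-(Q.j:ℝ)) * n) := by
    unfold DyadicCube.vol DyadicCube.len
    rw [show ((2:ℝ) ^ (-Q.j)) = (2:ℝ) ^ (((-Q.j : ℤ)):ℝ) from (Real.rpow_intCast 2 (-Q.j)).symm]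
    rw [← Real.rpow_natCast ((2:ℝ) ^ (((-Q.j:ℤ)):ℝ)) n, ← Real.rpow_mul h2.le]
    push_cast; ring_nf
  rw [hv, Real.sqrt_eq_rpow, ← Real.rpow_mul h2.le, ← Real.rpow_neg h2.le,
    ← Real.rpow_add h2]
  congr 1
  push_cast; ring

open scoped Classical in
lemma truncate_singleSeq_eval (n m : ℕ) (s p : ℝ)
    (W : (Fin n → ℝ) → Matrix (Fin m) (Fin m) ℂ) (Q P : DyadicCube n) (z : Fin m → ℂ)
    (j : ℤ) (x : Fin n → ℝ) :
    truncate n P (seqFn n m s p W (singleSeq n m Q z)) j x =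
      if j = Q.j ∧ P.j ≤ Q.j ∧ x ∈ P.toSet ∧ x ∈ Q.toSet then
        (2:ℝ) ^ ((Q.j : ℝ) * s) *
          ((Real.sqrt Q.vol)⁻¹ * cnorm ((hPow (W x) (1 / p)).mulVec z))
      else 0 := by
  unfold truncate
  by_cases hj : P.j ≤ j
  · rw [if_pos hj, Set.indicator_apply]
    by_cases hx : x ∈ P.toSet
    · rw [if_pos hx, seqFn_singleSeq]
      by_cases hc : j = Q.j ∧ x ∈ Q.toSet
      · rw [if_pos hc, if_pos ⟨hc.1, hc.1 ▸ hj, hx, hc.2⟩]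
      · rw [if_neg hc, if_neg (fun h => hc ⟨h.1, h.2.2.2⟩)]
    · rw [if_neg hx, if_neg (fun h => hx h.2.2.1)]
  · rw [if_neg hj, if_neg (fun h : j = Q.j ∧ P.j ≤ Q.j ∧ x ∈ P.toSet ∧ x ∈ Q.toSet =>
      hj (le_of_le_of_eq h.2.1 h.1.symm))]
    rfl

open scoped Classical in
lemma Lnorm_truncate_eval (n m : ℕ) (s p : ℝ) (hp : 0 < p) (q : ℝ≥0∞) (hq : q ≠ 0)
    (W : (Fin n → ℝ) → Matrix (Fin m) (Fin m) ℂ) (Q P : DyadicCube n) (z : Fin m → ℂ) :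
    LBnorm n p q (truncate n P (seqFn n m s p W (singleSeq n m Q z))) =
      (if P.j ≤ Q.j ∧ Q.toSet ⊆ P.toSet then
        ENNReal.ofReal ((2:ℝ) ^ ((Q.j:ℝ) * (s + (n:ℝ)/2))) *
          (∫⁻ x in Q.toSet,
            ENNReal.ofReal (cnorm ((hPow (W x) (1 / p)).mulVec z)) ^ p) ^ (1 / p)
      else 0) ∧
    LFnorm n p q (truncate n P (seqFn n m s p W (singleSeq n m Q z))) =
      (if P.j ≤ Q.j ∧ Q.toSet ⊆ P.toSet then
        ENNReal.ofReal ((2:ℝ) ^ ((Q.j:ℝ) * (s + (n:ℝ)/2))) *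
          (∫⁻ x in Q.toSet,
            ENNReal.ofReal (cnorm ((hPow (W x) (1 / p)).mulVec z)) ^ p) ^ (1 / p)
      else 0) := by
  set F := truncate n P (seqFn n m s p W (singleSeq n m Q z)) with hF
  have hzero : ∀ j, j ≠ Q.j → ∀ x, F j x = 0 := by
    intro j hj x
    rw [hF, truncate_singleSeq_eval, if_neg (fun h => hj h.1)]
  have hLB := LBnorm_of_single hp hq Q.j F hzero
  have hLF := LFnorm_of_single hp hq Q.j F hzero
  rw [hLB, hLF]
  have goal : (∫⁻ x, ENNReal.ofReal |F Q.j x| ^ p) ^ (1 / p) =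
      (if P.j ≤ Q.j ∧ Q.toSet ⊆ P.toSet then
        ENNReal.ofReal ((2:ℝ) ^ ((Q.j:ℝ) * (s + (n:ℝ)/2))) *
          (∫⁻ x in Q.toSet,
            ENNReal.ofReal (cnorm ((hPow (W x) (1 / p)).mulVec z)) ^ p) ^ (1 / p)
      else 0) := by
    by_cases hcond : P.j ≤ Q.j ∧ Q.toSet ⊆ P.toSet
    · rw [if_pos hcond]
      obtain ⟨hj, hsub⟩ := hcond
      set c0 : ℝ := (2:ℝ) ^ ((Q.j:ℝ) * s) * (Real.sqrt Q.vol)⁻¹ with hc0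
      have hc0nn : 0 ≤ c0 := by positivity
      have hFQ : ∀ x, ENNReal.ofReal |F Q.j x| ^ p =
          Q.toSet.indicator (fun x =>
            ENNReal.ofReal c0 ^ p *
              ENNReal.ofReal (cnorm ((hPow (W x) (1 / p)).mulVec z)) ^ p) x := by
        intro x
        rw [hF, truncate_singleSeq_eval, Set.indicator_apply]
        by_cases hx : x ∈ Q.toSet
        · rw [if_pos ⟨rfl, hj, hsub hx, hx⟩, if_pos hx]
          have hcn : 0 ≤ cnorm ((hPow (W x) (1 / p)).mulVec z) := cnorm_nonneg _
          rw [abs_of_nonneg (by positivity), ← mul_assoc, ← hc0,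
            ENNReal.ofReal_mul hc0nn, ENNReal.mul_rpow_of_nonneg _ _ hp.le]
        · rw [if_neg (fun h => hx h.2.2.2), if_neg hx]
          simp [ENNReal.zero_rpow_of_pos hp]
      simp_rw [hFQ]
      rw [lintegral_indicator Q.measurableSet_toSet,
        lintegral_const_mul' _ _ (by
          exact ENNReal.rpow_ne_top_of_nonneg hp.le ENNReal.ofReal_ne_top),
        ENNReal.mul_rpow_of_nonneg _ _ (by positivity : (0:ℝ) ≤ 1/p),
        ← ENNReal.rpow_mul, mul_one_div, div_self hp.ne', ENNReal.rpow_one]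
      congr 2
      rw [hc0, c0_eq]
    · rw [if_neg hcond]
      have hFQ0 : ∀ x, F Q.j x = 0 := by
        intro x
        rw [hF, truncate_singleSeq_eval]
        refine if_neg fun h => hcond ⟨h.2.1, ?_⟩
        exact DyadicCube.subset_of_mem_inter h.2.1 h.2.2.1 h.2.2.2
      simp_rw [hFQ0]
      simp [ENNReal.zero_rpow_of_pos hp, ENNReal.zero_rpow_of_pos (by positivity : (0:ℝ) < 1/p), hp]
  exact ⟨goal, goal⟩

-- Section C: spectral estimates for hPow

lemma cnorm_sq {m : ℕ} (v : Fin m → ℂ) :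
    cnorm v ^ 2 = ∑ i, Complex.normSq (v i) := by
  unfold cnorm
  rw [Real.sq_sqrt (Finset.sum_nonneg fun i _ => Complex.normSq_nonneg _)]

lemma star_dotProduct_self {m : ℕ} (v : Fin m → ℂ) :
    (star v ⬝ᵥ v).re = ∑ i, Complex.normSq (v i) := by
  rw [dotProduct, Complex.re_sum]
  refine Finset.sum_congr rfl fun i _ => ?_
  simp only [Pi.star_apply, RCLike.star_def]
  rw [mul_comm, Complex.mul_conj, Complex.ofReal_re]

lemma sum_normSq_mulVec_unitary {m : ℕ} (U : Matrix.unitaryGroup (Fin m) ℂ)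
    (v : Fin m → ℂ) :
    ∑ i, Complex.normSq (((U : Matrix (Fin m) (Fin m) ℂ) *ᵥ v) i) =
      ∑ i, Complex.normSq (v i) := by
  rw [← star_dotProduct_self, ← star_dotProduct_self]
  congr 1
  rw [Matrix.star_mulVec, ← Matrix.dotProduct_mulVec, Matrix.mulVec_mulVec,
    ← Matrix.star_eq_conjTranspose, Unitary.coe_star_mul_self, Matrix.one_mulVec]

lemma cnorm_mulVec_unitary {m : ℕ} (U : Matrix.unitaryGroup (Fin m) ℂ)
    (v : Fin m → ℂ) :
    cnorm ((U : Matrix (Fin m) (Fin m) ℂ) *ᵥ v) = cnorm v := by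
  unfold cnorm
  rw [sum_normSq_mulVec_unitary]

/-- Key formula: `|A^α z|² = ∑ λᵢ^{2α} |wᵢ|²` with `w = U* z`. -/
lemma cnorm_hPow_sq {m : ℕ} {A : Matrix (Fin m) (Fin m) ℂ} (hA : A.IsHermitian)
    (α : ℝ) (z : Fin m → ℂ) :
    cnorm ((hPow A α) *ᵥ z) ^ 2 =
      ∑ i, (hA.eigenvalues i ^ α) ^ 2 *
        Complex.normSq ((star (hA.eigenvectorUnitary : Matrix (Fin m) (Fin m) ℂ) *ᵥ z) i) := by
  unfold hPow
  rw [dif_pos hA]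
  set U := hA.eigenvectorUnitary
  set w := (star (U : Matrix (Fin m) (Fin m) ℂ)) *ᵥ z with hw
  have hsplit : ((U : Matrix (Fin m) (Fin m) ℂ) *
      Matrix.diagonal (fun i => ((hA.eigenvalues i ^ α : ℝ) : ℂ)) *
      star (U : Matrix (Fin m) (Fin m) ℂ)) *ᵥ z =
      (U : Matrix (Fin m) (Fin m) ℂ) *ᵥ
        (Matrix.diagonal (fun i => ((hA.eigenvalues i ^ α : ℝ) : ℂ)) *ᵥ w) := by
    rw [hw, Matrix.mulVec_mulVec, Matrix.mulVec_mulVec]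
  rw [hsplit]
  rw [cnorm_sq, sum_normSq_mulVec_unitary U]
  refine Finset.sum_congr rfl fun i _ => ?_
  rw [Matrix.mulVec_diagonal]
  rw [Complex.normSq_mul, Complex.normSq_ofReal]
  ring

lemma sum_normSq_star_mulVec {m : ℕ} (U : Matrix.unitaryGroup (Fin m) ℂ)
    (z : Fin m → ℂ) :
    ∑ i, Complex.normSq ((star (U : Matrix (Fin m) (Fin m) ℂ) *ᵥ z) i) =
      cnorm z ^ 2 := by
  rw [cnorm_sq]
  exact sum_normSq_mulVec_unitary (star U) z

lemma sum_re_diag_eq {m : ℕ} {A : Matrix (Fin m) (Fin m) ℂ} (hA : A.IsHermitian) :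
    ∑ i, (A i i).re = ∑ i, hA.eigenvalues i := by
  have h2 : Matrix.trace A = ∑ i, (hA.eigenvalues i : ℂ) := by
    conv_lhs => rw [hA.spectral_theorem]
    rw [Unitary.conjStarAlgAut_apply, Matrix.trace_mul_cycle, Unitary.coe_star_mul_self, Matrix.one_mul,
      Matrix.trace_diagonal]
    rfl
  have h3 : (Matrix.trace A).re = ∑ i, (A i i).re := by
    rw [Matrix.trace]
    exact Complex.re_sum _ _
  rw [← h3, h2, Complex.re_sum]
  push_cast
  rfl

lemma cnorm_hPow_le {m : ℕ} {A : Matrix (Fin m) (Fin m) ℂ} (hA : A.PosSemidef)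
    {p : ℝ} (hp : 0 < p) (z : Fin m → ℂ) :
    cnorm ((hPow A (1 / p)) *ᵥ z) ≤ (∑ i, (A i i).re) ^ (1 / p) * cnorm z := by
  have hherm := hA.1
  have htr : ∑ i, (A i i).re = ∑ i, hherm.eigenvalues i := sum_re_diag_eq hherm
  have hev : ∀ i, 0 ≤ hherm.eigenvalues i := hA.eigenvalues_nonneg
  have hle : ∀ i, hherm.eigenvalues i ≤ ∑ i, (A i i).re := by
    intro i
    rw [htr]
    exact Finset.single_le_sum (fun j _ => hev j) (Finset.mem_univ i)
  have htrnn : 0 ≤ ∑ i, (A i i).re := htr ▸ Finset.sum_nonneg fun i _ => hev i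
  have hsq : cnorm ((hPow A (1 / p)) *ᵥ z) ^ 2 ≤
      ((∑ i, (A i i).re) ^ (1 / p) * cnorm z) ^ 2 := by
    rw [cnorm_hPow_sq hherm, mul_pow, cnorm_sq, ← sum_normSq_mulVec_unitary
      (star hherm.eigenvectorUnitary) z, Finset.mul_sum]
    refine Finset.sum_le_sum fun i _ => ?_
    have h1 : hherm.eigenvalues i ^ (1/p) ≤ (∑ i, (A i i).re) ^ (1/p) :=
      Real.rpow_le_rpow (hev i) (hle i) (by positivity)
    have h2 : (0:ℝ) ≤ hherm.eigenvalues i ^ (1/p) := Real.rpow_nonneg (hev i) _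
    exact mul_le_mul_of_nonneg_right (by nlinarith) (Complex.normSq_nonneg _)
  have h1 : 0 ≤ cnorm ((hPow A (1 / p)) *ᵥ z) := cnorm_nonneg _
  have h2 : 0 ≤ (∑ i, (A i i).re) ^ (1 / p) * cnorm z := by
    have := cnorm_nonneg z; positivity
  nlinarith

lemma detre_pos {m : ℕ} {A : Matrix (Fin m) (Fin m) ℂ} (hA : A.PosDef) :
    0 < A.det.re := by
  have hdet : (0:ℂ) < A.det := hA.det_pos
  rw [Complex.lt_def] at hdet
  simpa using hdet.1

lemma trre_pos {m : ℕ} {A : Matrix (Fin m) (Fin m) ℂ} (hA : A.PosDef) (hm : 0 < m) :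
    0 < ∑ i, (A i i).re := by
  rw [sum_re_diag_eq hA.1]
  refine Finset.sum_pos (fun i _ => hA.eigenvalues_pos i) ?_
  exact Finset.univ_nonempty_iff.2 (by exact ⟨⟨0, hm⟩⟩)

lemma lm_pos {m : ℕ} {A : Matrix (Fin m) (Fin m) ℂ} (hA : A.PosDef) (hm : 0 < m) :
    0 < A.det.re / (∑ i, (A i i).re) ^ (m - 1) :=
  div_pos (detre_pos hA) (pow_pos (trre_pos hA hm) _)

lemma detre_eq_prod {m : ℕ} {A : Matrix (Fin m) (Fin m) ℂ} (hA : A.IsHermitian) :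
    A.det.re = ∏ i, hA.eigenvalues i := by
  rw [hA.det_eq_prod_eigenvalues]
  norm_cast

lemma lm_le_eigenvalues {m : ℕ} {A : Matrix (Fin m) (Fin m) ℂ} (hA : A.PosDef)
    (hm : 0 < m) (i : Fin m) :
    A.det.re / (∑ i, (A i i).re) ^ (m - 1) ≤ hA.1.eigenvalues i := by
  have hpos : ∀ j, 0 < hA.1.eigenvalues j := hA.eigenvalues_pos
  have htr : ∑ j, (A j j).re = ∑ j, hA.1.eigenvalues j := sum_re_diag_eq hA.1
  have htrpos : 0 < ∑ j, (A j j).re := trre_pos hA hm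
  rw [div_le_iff₀ (pow_pos htrpos _), detre_eq_prod hA.1,
    ← Finset.mul_prod_erase _ _ (Finset.mem_univ i)]
  refine mul_le_mul_of_nonneg_left ?_ (hpos i).le
  calc ∏ j ∈ Finset.univ.erase i, hA.1.eigenvalues j
      ≤ ∏ _j ∈ Finset.univ.erase i, ∑ k, (A k k).re :=
        Finset.prod_le_prod (fun j _ => (hpos j).le)
          (fun j _ => htr ▸ Finset.single_le_sum (fun k _ => (hpos k).le) (Finset.mem_univ j))
    _ = (∑ k, (A k k).re) ^ (m - 1) := by
        rw [Finset.prod_const, Finset.card_erase_of_mem (Finset.mem_univ i),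
          Finset.card_univ, Fintype.card_fin]

lemma cnorm_hPow_ge {m : ℕ} {A : Matrix (Fin m) (Fin m) ℂ} (hA : A.PosDef)
    (hm : 0 < m) {p : ℝ} (hp : 0 < p) (z : Fin m → ℂ) :
    (A.det.re / (∑ i, (A i i).re) ^ (m - 1)) ^ (1 / p) * cnorm z ≤
      cnorm ((hPow A (1 / p)) *ᵥ z) := by
  set lm := A.det.re / (∑ i, (A i i).re) ^ (m - 1) with hlm
  have hlmpos : 0 < lm := lm_pos hA hm
  have hherm := hA.1
  have hsq : (lm ^ (1 / p) * cnorm z) ^ 2 ≤ cnorm ((hPow A (1 / p)) *ᵥ z) ^ 2 := by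
    rw [cnorm_hPow_sq hherm, mul_pow, cnorm_sq, ← sum_normSq_mulVec_unitary
      (star hherm.eigenvectorUnitary) z, Finset.mul_sum]
    refine Finset.sum_le_sum fun i _ => ?_
    have h1 : lm ^ (1/p) ≤ hherm.eigenvalues i ^ (1/p) :=
      Real.rpow_le_rpow hlmpos.le (lm_le_eigenvalues hA hm i) (by positivity)
    have h2 : (0:ℝ) ≤ lm ^ (1/p) := Real.rpow_nonneg hlmpos.le _
    exact mul_le_mul_of_nonneg_right (by nlinarith) (Complex.normSq_nonneg _)
  have h1 : 0 ≤ cnorm ((hPow A (1 / p)) *ᵥ z) := cnorm_nonneg _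
  have h2 : 0 ≤ lm ^ (1 / p) * cnorm z := by
    have := cnorm_nonneg z; positivity
  nlinarith

-- Section D: finiteness and positivity of the integral

lemma cnorm_pos {m : ℕ} {z : Fin m → ℂ} (hz : z ≠ 0) : 0 < cnorm z := by
  unfold cnorm
  apply Real.sqrt_pos.2
  obtain ⟨i, hi⟩ := Function.ne_iff.1 hz
  exact Finset.sum_pos' (fun j _ => Complex.normSq_nonneg _)
    ⟨i, Finset.mem_univ i, Complex.normSq_pos.2 hi⟩

lemma trre_nonneg {m : ℕ} {A : Matrix (Fin m) (Fin m) ℂ} (hA : A.PosSemidef) :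
    0 ≤ ∑ i, (A i i).re := by
  rw [sum_re_diag_eq hA.1]
  exact Finset.sum_nonneg fun i _ => hA.eigenvalues_nonneg i

lemma I_lt_top {n m : ℕ} {p : ℝ} (hp : 0 < p)
    {W : (Fin n → ℝ) → Matrix (Fin m) (Fin m) ℂ}
    (hW : ∀ x, (W x).PosSemidef)
    (hWint : ∀ (Q : DyadicCube n) (i j' : Fin m),
      IntegrableOn (fun x => W x i j') Q.toSet volume)
    (Q : DyadicCube n) (z : Fin m → ℂ) :
    (∫⁻ x in Q.toSet, ENNReal.ofReal (cnorm ((hPow (W x) (1 / p)) *ᵥ z)) ^ p) < ⊤ := by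
  have hbound : ∀ x, ENNReal.ofReal (cnorm ((hPow (W x) (1 / p)) *ᵥ z)) ^ p ≤
      ENNReal.ofReal ((∑ i, (W x i i).re) * cnorm z ^ p) := by
    intro x
    have htrnn : 0 ≤ ∑ i, (W x i i).re := trre_nonneg (hW x)
    have h1 : cnorm ((hPow (W x) (1 / p)) *ᵥ z) ≤
        (∑ i, (W x i i).re) ^ (1/p) * cnorm z := cnorm_hPow_le (hW x) hp z
    calc ENNReal.ofReal (cnorm ((hPow (W x) (1 / p)) *ᵥ z)) ^ p
        ≤ ENNReal.ofReal ((∑ i, (W x i i).re) ^ (1/p) * cnorm z) ^ p :=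
          ENNReal.rpow_le_rpow (ENNReal.ofReal_le_ofReal h1) hp.le
      _ = ENNReal.ofReal (((∑ i, (W x i i).re) ^ (1/p) * cnorm z) ^ p) := by
          rw [← ENNReal.ofReal_rpow_of_nonneg
            (mul_nonneg (Real.rpow_nonneg htrnn _) (cnorm_nonneg z)) hp.le]
      _ = ENNReal.ofReal ((∑ i, (W x i i).re) * cnorm z ^ p) := by
          congr 1
          rw [Real.mul_rpow (Real.rpow_nonneg htrnn _) (cnorm_nonneg z),
            ← Real.rpow_mul htrnn, one_div, inv_mul_cancel₀ hp.ne', Real.rpow_one]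
  calc (∫⁻ x in Q.toSet, ENNReal.ofReal (cnorm ((hPow (W x) (1 / p)) *ᵥ z)) ^ p)
      ≤ ∫⁻ x in Q.toSet, ENNReal.ofReal ((∑ i, (W x i i).re) * cnorm z ^ p) :=
        lintegral_mono fun x => hbound x
    _ < ⊤ := by
        refine Integrable.lintegral_lt_top ?_
        refine Integrable.mul_const ?_ _
        refine integrable_finset_sum _ fun i _ => ?_
        exact (hWint Q i i).re

lemma measurable_detre {n m : ℕ} {W : (Fin n → ℝ) → Matrix (Fin m) (Fin m) ℂ}
    (hWmeas : ∀ i j' : Fin m, Measurable (fun x => W x i j')) :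
    Measurable (fun x => (W x).det.re) := by
  have : Measurable (fun x => (W x).det) := by
    simp_rw [Matrix.det_apply]
    refine Finset.measurable_sum _ fun σ _ => ?_
    have : Measurable fun x => ∏ i, W x (σ i) i :=
      Finset.measurable_prod _ fun i _ => hWmeas (σ i) i
    exact this.const_smul (Equiv.Perm.sign σ)
  exact Complex.measurable_re.comp this

lemma measurable_trre {n m : ℕ} {W : (Fin n → ℝ) → Matrix (Fin m) (Fin m) ℂ}
    (hWmeas : ∀ i j' : Fin m, Measurable (fun x => W x i j')) :
    Measurable (fun x => ∑ i, (W x i i).re) :=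
  Finset.measurable_sum _ fun i _ => Complex.measurable_re.comp (hWmeas i i)

lemma I_pos {n m : ℕ} (hm : 0 < m) {p : ℝ} (hp : 0 < p)
    {W : (Fin n → ℝ) → Matrix (Fin m) (Fin m) ℂ}
    (hWpd : ∀ᵐ x ∂(volume : Measure (Fin n → ℝ)), (W x).PosDef)
    (hWmeas : ∀ i j' : Fin m, Measurable (fun x => W x i j'))
    (Q : DyadicCube n) {z : Fin m → ℂ} (hz : z ≠ 0) :
    0 < ∫⁻ x in Q.toSet, ENNReal.ofReal (cnorm ((hPow (W x) (1 / p)) *ᵥ z)) ^ p := by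
  set lm : (Fin n → ℝ) → ℝ := fun x => (W x).det.re / (∑ i, (W x i i).re) ^ (m - 1)
    with hlmdef
  have hlmmeas : Measurable lm :=
    (measurable_detre hWmeas).div ((measurable_trre hWmeas).pow_const _)
  set g : (Fin n → ℝ) → ℝ≥0∞ := fun x =>
    ENNReal.ofReal (lm x) * ENNReal.ofReal (cnorm z ^ p) with hgdef
  have hgmeas : Measurable g :=
    (ENNReal.measurable_ofReal.comp hlmmeas).mul_const _
  have hbound : ∀ x, (W x).PosDef →
      g x ≤ ENNReal.ofReal (cnorm ((hPow (W x) (1 / p)) *ᵥ z)) ^ p := by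
    intro x hpd
    have hlmpos : 0 < lm x := lm_pos hpd hm
    have h1 : lm x ^ (1/p) * cnorm z ≤ cnorm ((hPow (W x) (1 / p)) *ᵥ z) :=
      cnorm_hPow_ge hpd hm hp z
    have hmn : 0 ≤ lm x ^ (1/p) * cnorm z :=
      mul_nonneg (Real.rpow_nonneg hlmpos.le _) (cnorm_nonneg z)
    calc g x = ENNReal.ofReal ((lm x ^ (1/p) * cnorm z) ^ p) := by
          simp only [hgdef]
          rw [← ENNReal.ofReal_mul (by positivity)]
          congr 1
          rw [Real.mul_rpow (Real.rpow_nonneg hlmpos.le _) (cnorm_nonneg z),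
            ← Real.rpow_mul hlmpos.le, one_div, inv_mul_cancel₀ hp.ne', Real.rpow_one]
      _ = ENNReal.ofReal (lm x ^ (1/p) * cnorm z) ^ p := by
          rw [← ENNReal.ofReal_rpow_of_nonneg hmn hp.le]
      _ ≤ ENNReal.ofReal (cnorm ((hPow (W x) (1 / p)) *ᵥ z)) ^ p :=
          ENNReal.rpow_le_rpow (ENNReal.ofReal_le_ofReal h1) hp.le
  by_contra hcon
  push_neg at hcon
  have hzero : (∫⁻ x in Q.toSet, ENNReal.ofReal (cnorm ((hPow (W x) (1 / p)) *ᵥ z)) ^ p) = 0 :=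
    le_antisymm hcon zero_le
  have hgle : (∫⁻ x in Q.toSet, g x) = 0 := by
    refine le_antisymm ?_ zero_le
    rw [← hzero]
    refine lintegral_mono_ae ?_
    exact (ae_restrict_of_ae (hWpd.mono fun x hx => hbound x hx))
  rw [lintegral_eq_zero_iff hgmeas] at hgle
  have hres : (volume.restrict Q.toSet) ≠ 0 := by
    intro h0
    have := Q.volume_toSet_pos
    rw [← Measure.restrict_apply_univ, h0] at this
    simp at this
  have hne : (MeasureTheory.ae (volume.restrict Q.toSet)).NeBot := ae_neBot.2 hres
  obtain ⟨x, hx1, hx2⟩ := ((ae_restrict_of_ae hWpd).and hgle).exists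
  have hlmpos : 0 < lm x := lm_pos hx1 hm
  have : g x ≠ 0 := by
    rw [hgdef]
    simp only [ne_eq, mul_eq_zero, ENNReal.ofReal_eq_zero, not_or, not_le]
    have hc := cnorm_pos hz
    constructor
    · exact hlmpos
    · positivity
  rw [hx2] at this
  · simp at this

-- Section E: assembling the equivalences

open scoped Classical in
/-- The common value of both norms on a single-pointed sequence. -/
noncomputable def normVal (n m : ℕ) (s p : ℝ) (υ : DyadicCube n → ℝ)
    (W : (Fin n → ℝ) → Matrix (Fin m) (Fin m) ℂ) (Q : DyadicCube n) (z : Fin m → ℂ) :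
    ℝ≥0∞ :=
  ⨆ P : DyadicCube n, (ENNReal.ofReal (υ P))⁻¹ *
    (if P.j ≤ Q.j ∧ Q.toSet ⊆ P.toSet then
      ENNReal.ofReal ((2:ℝ) ^ ((Q.j:ℝ) * (s + (n:ℝ)/2))) *
        (∫⁻ x in Q.toSet,
          ENNReal.ofReal (cnorm ((hPow (W x) (1 / p)).mulVec z)) ^ p) ^ (1 / p)
    else 0)

lemma bSeqNorm_eq_normVal (n m : ℕ) (s p : ℝ) (hp : 0 < p) (q : ℝ≥0∞) (hq : q ≠ 0)
    (υ : DyadicCube n → ℝ) (W : (Fin n → ℝ) → Matrix (Fin m) (Fin m) ℂ)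
    (Q : DyadicCube n) (z : Fin m → ℂ) :
    bSeqNorm n m s p q υ W (singleSeq n m Q z) = normVal n m s p υ W Q z := by
  unfold bSeqNorm LBvNorm normVal
  refine iSup_congr fun P => ?_
  congr 1
  rw [(Lnorm_truncate_eval n m s p hp q hq W Q P z).1]

lemma fSeqNorm_eq_normVal (n m : ℕ) (s p : ℝ) (hp : 0 < p) (q : ℝ≥0∞) (hq : q ≠ 0)
    (υ : DyadicCube n → ℝ) (W : (Fin n → ℝ) → Matrix (Fin m) (Fin m) ℂ)
    (Q : DyadicCube n) (z : Fin m → ℂ) :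
    fSeqNorm n m s p q υ W (singleSeq n m Q z) = normVal n m s p υ W Q z := by
  unfold fSeqNorm LFvNorm normVal
  refine iSup_congr fun P => ?_
  congr 1
  rw [(Lnorm_truncate_eval n m s p hp q hq W Q P z).2]

lemma singleBound_eq (n m : ℕ) (s p : ℝ) (υ : DyadicCube n → ℝ)
    (hυpos : ∀ Q, 0 < υ Q) (W : (Fin n → ℝ) → Matrix (Fin m) (Fin m) ℂ)
    (Q : DyadicCube n) (z : Fin m → ℂ) :
    singleBound n m s p υ W Q z = (ENNReal.ofReal (υ Q))⁻¹ *
      (ENNReal.ofReal ((2:ℝ) ^ ((Q.j:ℝ) * (s + (n:ℝ)/2))) *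
        (∫⁻ x in Q.toSet,
          ENNReal.ofReal (cnorm ((hPow (W x) (1 / p)).mulVec z)) ^ p) ^ (1 / p)) := by
  unfold singleBound
  rw [ENNReal.ofReal_div_of_pos (hυpos Q), div_eq_mul_inv]
  ring

lemma normVal_forward (n m : ℕ) (s p : ℝ) (hp : 0 < p)
    (W : (Fin n → ℝ) → Matrix (Fin m) (Fin m) ℂ)
    (hW : ∀ x, (W x).PosSemidef)
    (hWint : ∀ (Q : DyadicCube n) (i j' : Fin m),
      IntegrableOn (fun x => W x i j') Q.toSet volume)
    (υ : DyadicCube n → ℝ) (hυpos : ∀ Q, 0 < υ Q)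
    {C : ℝ} (hC : 0 < C)
    (hai : ∀ Q P : DyadicCube n, Q.toSet ⊆ P.toSet → υ Q ≤ C * υ P)
    (Q : DyadicCube n) (z : Fin m → ℂ) :
    normVal n m s p υ W Q z ≠ ⊤ ∧
    ENNReal.ofReal 1 * singleBound n m s p υ W Q z ≤ normVal n m s p υ W Q z ∧
    normVal n m s p υ W Q z ≤ ENNReal.ofReal C * singleBound n m s p υ W Q z := by
  classical
  set c2 : ℝ≥0∞ := ENNReal.ofReal ((2:ℝ) ^ ((Q.j:ℝ) * (s + (n:ℝ)/2))) with hc2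
  set I : ℝ≥0∞ := ∫⁻ x in Q.toSet,
    ENNReal.ofReal (cnorm ((hPow (W x) (1 / p)).mulVec z)) ^ p with hI
  set B : ℝ≥0∞ := c2 * I ^ (1/p) with hB
  have hBtop : B ≠ ⊤ := by
    rw [hB]
    exact ENNReal.mul_ne_top ENNReal.ofReal_ne_top
      (ENNReal.rpow_ne_top_of_nonneg (by positivity) (I_lt_top hp hW hWint Q z).ne)
  have hSB : singleBound n m s p υ W Q z = (ENNReal.ofReal (υ Q))⁻¹ * B :=
    singleBound_eq n m s p υ hυpos W Q z
  have hupper : normVal n m s p υ W Q z ≤ ENNReal.ofReal C * singleBound n m s p υ W Q z := by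
    rw [hSB]
    refine iSup_le fun P => ?_
    by_cases hcond : P.j ≤ Q.j ∧ Q.toSet ⊆ P.toSet
    · rw [if_pos hcond]
      have hle : υ Q ≤ C * υ P := hai Q P hcond.2
      have hkey : (ENNReal.ofReal (υ P))⁻¹ ≤ ENNReal.ofReal C * (ENNReal.ofReal (υ Q))⁻¹ := by
        rw [← ENNReal.ofReal_inv_of_pos (hυpos P), ← ENNReal.ofReal_inv_of_pos (hυpos Q),
          ← ENNReal.ofReal_mul hC.le]
        refine ENNReal.ofReal_le_ofReal ?_
        rw [inv_eq_one_div, inv_eq_one_div, mul_one_div,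
          div_le_div_iff₀ (hυpos P) (hυpos Q)]
        nlinarith [hυpos P, hυpos Q]
      calc (ENNReal.ofReal (υ P))⁻¹ * B ≤
          (ENNReal.ofReal C * (ENNReal.ofReal (υ Q))⁻¹) * B :=
            mul_le_mul_left hkey B
        _ = ENNReal.ofReal C * ((ENNReal.ofReal (υ Q))⁻¹ * B) := by ring
    · rw [if_neg hcond, mul_zero]
      exact zero_le
  refine ⟨?_, ?_, hupper⟩
  · refine ne_top_of_le_ne_top ?_ hupper
    rw [hSB]
    exact ENNReal.mul_ne_top ENNReal.ofReal_ne_top (ENNReal.mul_ne_top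
      (by simp [ENNReal.inv_ne_top, ENNReal.ofReal_pos, hυpos Q]) hBtop)
  · rw [ENNReal.ofReal_one, one_mul, hSB]
    refine le_iSup_of_le Q ?_
    rw [if_pos ⟨le_rfl, subset_rfl⟩]

lemma normVal_backward (n m : ℕ) (hn : 0 < n) (hm : 0 < m) (s p : ℝ) (hp : 0 < p)
    (W : (Fin n → ℝ) → Matrix (Fin m) (Fin m) ℂ)
    (hW : ∀ x, (W x).PosSemidef)
    (hWint : ∀ (Q : DyadicCube n) (i j' : Fin m),
      IntegrableOn (fun x => W x i j') Q.toSet volume)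
    (hWpd : ∀ᵐ x ∂(volume : Measure (Fin n → ℝ)), (W x).PosDef)
    (hWmeas : ∀ i j' : Fin m, Measurable (fun x => W x i j'))
    (υ : DyadicCube n → ℝ) (hυpos : ∀ Q, 0 < υ Q)
    {u : Fin m → ℂ} (hu : u ≠ 0) {C : ℝ} (hC : 0 < C)
    (hub : ∀ Q : DyadicCube n,
      normVal n m s p υ W Q u ≤ ENNReal.ofReal C * singleBound n m s p υ W Q u) :
    ∀ Q P : DyadicCube n, Q.toSet ⊆ P.toSet → υ Q ≤ C * υ P := by
  classical
  intro Q P hsub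
  have hj : P.j ≤ Q.j := DyadicCube.jle_of_subset hn hsub
  set c2 : ℝ≥0∞ := ENNReal.ofReal ((2:ℝ) ^ ((Q.j:ℝ) * (s + (n:ℝ)/2))) with hc2
  set I : ℝ≥0∞ := ∫⁻ x in Q.toSet,
    ENNReal.ofReal (cnorm ((hPow (W x) (1 / p)).mulVec u)) ^ p with hI
  set B : ℝ≥0∞ := c2 * I ^ (1/p) with hB
  have hIpos : 0 < I := I_pos hm hp hWpd hWmeas Q hu
  have hItop : I ≠ ⊤ := (I_lt_top hp hW hWint Q u).ne
  have hB0 : B ≠ 0 := by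
    rw [hB]
    refine mul_ne_zero ?_ ?_
    · simp [hc2, ENNReal.ofReal_pos]
      positivity
    · exact (ENNReal.rpow_pos hIpos hItop).ne'
  have hBtop : B ≠ ⊤ := by
    rw [hB]
    exact ENNReal.mul_ne_top ENNReal.ofReal_ne_top
      (ENNReal.rpow_ne_top_of_nonneg (by positivity) hItop)
  have hlow : (ENNReal.ofReal (υ P))⁻¹ * B ≤ normVal n m s p υ W Q u := by
    refine le_iSup_of_le P ?_
    rw [if_pos ⟨hj, hsub⟩]
  have hchain : (ENNReal.ofReal (υ P))⁻¹ * B ≤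
      (ENNReal.ofReal C * (ENNReal.ofReal (υ Q))⁻¹) * B := by
    calc (ENNReal.ofReal (υ P))⁻¹ * B ≤ normVal n m s p υ W Q u := hlow
      _ ≤ ENNReal.ofReal C * singleBound n m s p υ W Q u := hub Q
      _ = (ENNReal.ofReal C * (ENNReal.ofReal (υ Q))⁻¹) * B := by
          rw [singleBound_eq n m s p υ hυpos W Q u, ← hc2, ← hI, ← hB]; ring
  have hkey : (ENNReal.ofReal (υ P))⁻¹ ≤ ENNReal.ofReal C * (ENNReal.ofReal (υ Q))⁻¹ :=
    (ENNReal.mul_le_mul_iff_left hB0 hBtop).1 hchain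
  rw [← ENNReal.ofReal_inv_of_pos (hυpos P), ← ENNReal.ofReal_inv_of_pos (hυpos Q),
    ← ENNReal.ofReal_mul hC.le, ENNReal.ofReal_le_ofReal_iff (mul_nonneg hC.le (inv_nonneg.2 (hυpos Q).le))] at hkey
  have h2 : (1:ℝ)/υ P ≤ C / υ Q := by
    rw [one_div]
    calc (υ P)⁻¹ ≤ C * (υ Q)⁻¹ := hkey
      _ = C / υ Q := by rw [div_eq_mul_inv]
  rw [div_le_div_iff₀ (hυpos P) (hυpos Q)] at h2
  nlinarith [hυpos P, hυpos Q]
/-- Let `s ∈ ℝ`, `0 < p < ∞`, `0 < q ≤ ∞`, `W` a matrix weight,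
`υ : 𝒟 → (0,∞)`. TFAE (for the Besov case `a = b` and the Triebel–Lizorkin case `a = f`):
(i) `υ` is almost increasing; (ii) every single-pointed sequence `{1_{Q=R} z}_R` lies in
`ȧ^{s,υ}_{p,q}(W)` with quasi-norm `≍ 2^{j_Q (s + n/2)} υ(Q)⁻¹ (∫_Q |W^{1/p} z|^p)^{1/p}`
uniformly in `Q, z`; (iii) (ii) holds for some fixed `u ≠ 0`. -/
theorem single_pointed_norm_tfae (n m : ℕ) (hn : 0 < n) (hm : 0 < m)
    (s p : ℝ) (hp : 0 < p) (q : ℝ≥0∞) (hq : 0 < q)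
    (W : (Fin n → ℝ) → Matrix (Fin m) (Fin m) ℂ)
    (hW : ∀ x, (W x).PosSemidef)
    (hWpd : ∀ᵐ x ∂(volume : Measure (Fin n → ℝ)), (W x).PosDef)
    (hWmeas : ∀ i j' : Fin m, Measurable (fun x => W x i j'))
    (hWint : ∀ (Q : DyadicCube n) (i j' : Fin m),
      IntegrableOn (fun x => W x i j') Q.toSet volume)
    (υ : DyadicCube n → ℝ) (hυpos : ∀ Q, 0 < υ Q) :
    ((∃ C : ℝ, 0 < C ∧ ∀ Q P : DyadicCube n, Q.toSet ⊆ P.toSet → υ Q ≤ C * υ P) ↔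
      (∃ c C : ℝ, 0 < c ∧ 0 < C ∧ ∀ (Q : DyadicCube n) (z : Fin m → ℂ),
        bSeqNorm n m s p q υ W (singleSeq n m Q z) ≠ ⊤ ∧
        ENNReal.ofReal c * singleBound n m s p υ W Q z ≤
          bSeqNorm n m s p q υ W (singleSeq n m Q z) ∧
        bSeqNorm n m s p q υ W (singleSeq n m Q z) ≤
          ENNReal.ofReal C * singleBound n m s p υ W Q z)) ∧
    ((∃ C : ℝ, 0 < C ∧ ∀ Q P : DyadicCube n, Q.toSet ⊆ P.toSet → υ Q ≤ C * υ P) ↔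
      (∃ u : Fin m → ℂ, u ≠ 0 ∧ ∃ c C : ℝ, 0 < c ∧ 0 < C ∧ ∀ Q : DyadicCube n,
        bSeqNorm n m s p q υ W (singleSeq n m Q u) ≠ ⊤ ∧
        ENNReal.ofReal c * singleBound n m s p υ W Q u ≤
          bSeqNorm n m s p q υ W (singleSeq n m Q u) ∧
        bSeqNorm n m s p q υ W (singleSeq n m Q u) ≤
          ENNReal.ofReal C * singleBound n m s p υ W Q u)) ∧
    ((∃ C : ℝ, 0 < C ∧ ∀ Q P : DyadicCube n, Q.toSet ⊆ P.toSet → υ Q ≤ C * υ P) ↔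
      (∃ c C : ℝ, 0 < c ∧ 0 < C ∧ ∀ (Q : DyadicCube n) (z : Fin m → ℂ),
        fSeqNorm n m s p q υ W (singleSeq n m Q z) ≠ ⊤ ∧
        ENNReal.ofReal c * singleBound n m s p υ W Q z ≤
          fSeqNorm n m s p q υ W (singleSeq n m Q z) ∧
        fSeqNorm n m s p q υ W (singleSeq n m Q z) ≤
          ENNReal.ofReal C * singleBound n m s p υ W Q z)) ∧
    ((∃ C : ℝ, 0 < C ∧ ∀ Q P : DyadicCube n, Q.toSet ⊆ P.toSet → υ Q ≤ C * υ P) ↔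
      (∃ u : Fin m → ℂ, u ≠ 0 ∧ ∃ c C : ℝ, 0 < c ∧ 0 < C ∧ ∀ Q : DyadicCube n,
        fSeqNorm n m s p q υ W (singleSeq n m Q u) ≠ ⊤ ∧
        ENNReal.ofReal c * singleBound n m s p υ W Q u ≤
          fSeqNorm n m s p q υ W (singleSeq n m Q u) ∧
        fSeqNorm n m s p q υ W (singleSeq n m Q u) ≤
          ENNReal.ofReal C * singleBound n m s p υ W Q u)) := by
  have hq0 : q ≠ 0 := hq.ne'
  have hu0ne : (Pi.single (⟨0, hm⟩ : Fin m) (1:ℂ) : Fin m → ℂ) ≠ 0 := by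
    intro h
    have := congrFun h ⟨0, hm⟩
    simp at this
  set u0 : Fin m → ℂ := Pi.single ⟨0, hm⟩ 1 with hu0
  refine ⟨⟨?_, ?_⟩, ⟨?_, ?_⟩, ⟨?_, ?_⟩, ⟨?_, ?_⟩⟩
  · rintro ⟨C, hC, hai⟩
    refine ⟨1, C, one_pos, hC, fun Q z => ?_⟩
    rw [bSeqNorm_eq_normVal n m s p hp q hq0 υ W Q z]
    exact normVal_forward n m s p hp W hW hWint υ hυpos hC hai Q z
  · rintro ⟨c, C, hc, hC, h⟩
    refine ⟨C, hC, normVal_backward n m hn hm s p hp W hW hWint hWpd hWmeas υ hυpos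
      hu0ne hC fun Q => ?_⟩
    have := (h Q u0).2.2
    rwa [bSeqNorm_eq_normVal n m s p hp q hq0 υ W Q u0] at this
  · rintro ⟨C, hC, hai⟩
    refine ⟨u0, hu0ne, 1, C, one_pos, hC, fun Q => ?_⟩
    rw [bSeqNorm_eq_normVal n m s p hp q hq0 υ W Q u0]
    exact normVal_forward n m s p hp W hW hWint υ hυpos hC hai Q u0
  · rintro ⟨u, hu, c, C, hc, hC, h⟩
    refine ⟨C, hC, normVal_backward n m hn hm s p hp W hW hWint hWpd hWmeas υ hυpos
      hu hC fun Q => ?_⟩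
    have := (h Q).2.2
    rwa [bSeqNorm_eq_normVal n m s p hp q hq0 υ W Q u] at this
  · rintro ⟨C, hC, hai⟩
    refine ⟨1, C, one_pos, hC, fun Q z => ?_⟩
    rw [fSeqNorm_eq_normVal n m s p hp q hq0 υ W Q z]
    exact normVal_forward n m s p hp W hW hWint υ hυpos hC hai Q z
  · rintro ⟨c, C, hc, hC, h⟩
    refine ⟨C, hC, normVal_backward n m hn hm s p hp W hW hWint hWpd hWmeas υ hυpos
      hu0ne hC fun Q => ?_⟩
    have := (h Q u0).2.2
    rwa [fSeqNorm_eq_normVal n m s p hp q hq0 υ W Q u0] at this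
  · rintro ⟨C, hC, hai⟩
    refine ⟨u0, hu0ne, 1, C, one_pos, hC, fun Q => ?_⟩
    rw [fSeqNorm_eq_normVal n m s p hp q hq0 υ W Q u0]
    exact normVal_forward n m s p hp W hW hWint υ hυpos hC hai Q u0
  · rintro ⟨u, hu, c, C, hc, hC, h⟩
    refine ⟨C, hC, normVal_backward n m hn hm s p hp W hW hWint hWpd hWmeas υ hυpos
      hu hC fun Q => ?_⟩
    have := (h Q).2.2
    rwa [fSeqNorm_eq_normVal n m s p hp q hq0 υ W Q u] at this
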